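/- Let (X,d) be a compact metric space and T : X → X a continuous map satisfying the Closing Lemma and having a point with dense orbit, and let f : X → ℝ be a continuous function satisfying the Walters property. Then f is cohomologous to zero if and only if lim_{n→∞} (1/n)‖S_n f‖_∞ = 0. In particular, lim_{n→∞} (1/n)‖S_n f‖_∞ = 0 if and only if sup_{n≥1} ‖S_n f‖_∞ < ∞. -/

import Mathlib

open Filter Topology

/-- Birkhoff sum `S_n f = ∑_{k=0}^{n-1} f ∘ T^k`. -/
noncomputable def birkhoff {X : Type*} (T : X → X) (f : X → ℝ) (n : ℕ) (x : X) : ℝ :=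
  ∑ k ∈ Finset.range n, f (T^[k] x)

/-!
Along the dense orbit of `x₀` put `q (T^n x₀) := S_n f x₀`; then `q ∘ T - q = f` on the orbit,
so everything hinges on `q` being uniformly continuous there. If `S_n f / n → 0` uniformly,
`S_n f` vanishes on every periodic orbit (it grows linearly along the orbit's multiples). By the
Closing Lemma an almost return `T^n x ≈ x` is shadowed by a periodic orbit, and by the Walters
property `S_n f x` is then close to the Birkhoff sum over that orbit, i.e. to `0`. Since
`S_m f x₀ - S_n f x₀ = S_{m-n} f (T^n x₀)`, this is exactly the uniform continuity of `q`.
Conversely a continuous coboundary has telescoping, hence bounded, Birkhoff sums.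
-/

section Birkhoff

variable {X : Type*} {T : X → X} {f : X → ℝ}

theorem birkhoff_add (m n : ℕ) (x : X) :
    birkhoff T f (m + n) x = birkhoff T f m x + birkhoff T f n (T^[m] x) := by
  simp only [birkhoff, Finset.sum_range_add, ← Function.iterate_add_apply, Nat.add_comm _ m]

theorem birkhoff_succ (n : ℕ) (x : X) :
    birkhoff T f (n + 1) x = birkhoff T f n x + f (T^[n] x) :=
  Finset.sum_range_succ _ _

theorem birkhoff_of_coboundary {q : X → ℝ} (hq : ∀ x, f x = q (T x) - q x) (n : ℕ) (x : X) :
    birkhoff T f n x = q (T^[n] x) - q x := by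
  induction n with
  | zero => simp [birkhoff]
  | succ n ih =>
    rw [birkhoff_succ, ih, hq, ← Function.iterate_succ_apply' T n x]
    ring

theorem birkhoff_mul_of_isPeriodicPt {n : ℕ} {y : X} (hy : Function.IsPeriodicPt T n y)
    (m : ℕ) : birkhoff T f (m * n) y = m * birkhoff T f n y := by
  induction m with
  | zero => simp [birkhoff]
  | succ m ih =>
    rw [add_mul, one_mul, birkhoff_add, ih, (hy.const_mul m).eq]
    push_cast
    ring

theorem abs_birkhoff_le_iSup [TopologicalSpace X] [CompactSpace X] (hT : Continuous T)
    (hf : Continuous f) (n : ℕ) (x : X) :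
    |birkhoff T f n x| ≤ ⨆ x : X, |birkhoff T f n x| := by
  have hcont : Continuous (birkhoff T f n) :=
    continuous_finsetSum _ fun k _ => hf.comp (hT.iterate k)
  exact le_ciSup (isCompact_range hcont.abs).bddAbove x

end Birkhoff

section Coboundary

variable {X : Type*} {T : X → X} {f : X → ℝ}

theorem exists_bound_birkhoff_of_coboundary [TopologicalSpace X] [CompactSpace X]
    (h : ∃ q : X → ℝ, Continuous q ∧ ∀ x, f x = q (T x) - q x) :
    ∃ K : ℝ, ∀ n : ℕ, 1 ≤ n → ∀ x : X, |birkhoff T f n x| ≤ K := by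
  obtain ⟨q, hq, hqf⟩ := h
  obtain ⟨C, hC⟩ := (isCompact_range hq.abs).bddAbove
  refine ⟨2 * C, fun n _ x => ?_⟩
  rw [birkhoff_of_coboundary hqf]
  have h₁ : |q (T^[n] x)| ≤ C := hC ⟨_, rfl⟩
  have h₂ : |q x| ≤ C := hC ⟨x, rfl⟩
  linarith [abs_sub (q (T^[n] x)) (q x)]

theorem tendsto_iSup_abs_birkhoff_div_of_bound
    (h : ∃ K : ℝ, ∀ n : ℕ, 1 ≤ n → ∀ x : X, |birkhoff T f n x| ≤ K) :
    Tendsto (fun n : ℕ => (⨆ x : X, |birkhoff T f n x|) / (n : ℝ)) atTop (𝓝 0) := by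
  obtain ⟨K, hK⟩ := h
  refine squeeze_zero' (Eventually.of_forall fun n => ?_) ?_
    (tendsto_const_div_atTop_nhds_zero_nat (max K 0))
  · exact div_nonneg (Real.iSup_nonneg fun _ => abs_nonneg _) n.cast_nonneg
  · filter_upwards [eventually_ge_atTop 1] with n hn
    gcongr
    exact Real.iSup_le (fun x => (hK n hn x).trans (le_max_left _ _)) (le_max_right _ _)

theorem birkhoff_eq_zero_of_isPeriodicPt [TopologicalSpace X] [CompactSpace X]
    (hT : Continuous T) (hf : Continuous f)
    (H : Tendsto (fun n : ℕ => (⨆ x : X, |birkhoff T f n x|) / (n : ℝ)) atTop (𝓝 0))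
    {n : ℕ} (hn : 1 ≤ n) {y : X} (hy : Function.IsPeriodicPt T n y) : birkhoff T f n y = 0 := by
  have hmul : Tendsto (fun m : ℕ => m * n) atTop atTop :=
    tendsto_id.atTop_mul_const' (by omega)
  have hle : ∀ m : ℕ, 1 ≤ m → |birkhoff T f n y| / n ≤
      (⨆ x : X, |birkhoff T f (m * n) x|) / ((m * n : ℕ) : ℝ) := by
    intro m hm
    have hm' : (0 : ℝ) < m := by exact_mod_cast hm
    calc |birkhoff T f n y| / n = |birkhoff T f (m * n) y| / ((m * n : ℕ) : ℝ) := by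
          rw [birkhoff_mul_of_isPeriodicPt hy, abs_mul, Nat.abs_cast, Nat.cast_mul,
            mul_div_mul_left _ _ hm'.ne']
      _ ≤ _ := by gcongr; exact abs_birkhoff_le_iSup hT hf _ y
  have hzero : |birkhoff T f n y| / n ≤ 0 :=
    ge_of_tendsto (H.comp hmul) (eventually_atTop.2 ⟨1, hle⟩)
  have hn' : (0 : ℝ) < n := by exact_mod_cast hn
  exact abs_nonpos_iff.mp (by simpa using (div_le_iff₀ hn').mp hzero)

end Coboundary

section DenseOrbit

variable {X : Type*} [MetricSpace X] {T : X → X} {f : X → ℝ}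

theorem abs_birkhoff_lt_of_dist_iterate_lt
    (hClosing : ∀ ε > (0 : ℝ), ∃ δ > (0 : ℝ), ∀ (x : X) (n : ℕ), 1 ≤ n →
      dist (T^[n] x) x < δ →
      ∃ y : X, T^[n] y = y ∧ ∀ k < n, dist (T^[k] x) (T^[k] y) < ε)
    (hWalters : ∀ κ > (0 : ℝ), ∃ ε > (0 : ℝ), ∀ (x y : X) (n : ℕ), 1 ≤ n →
      (∀ k < n, dist (T^[k] x) (T^[k] y) < ε) →
        |birkhoff T f n x - birkhoff T f n y| < κ)
    (hper : ∀ n : ℕ, 1 ≤ n → ∀ y : X, Function.IsPeriodicPt T n y → birkhoff T f n y = 0) :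
    ∀ κ > (0 : ℝ), ∃ δ > (0 : ℝ), ∀ (x : X) (n : ℕ), 1 ≤ n →
      dist (T^[n] x) x < δ → |birkhoff T f n x| < κ := by
  intro κ hκ
  obtain ⟨ε, hε, hW⟩ := hWalters κ hκ
  obtain ⟨δ, hδ, hC⟩ := hClosing ε hε
  refine ⟨δ, hδ, fun x n hn hd => ?_⟩
  obtain ⟨y, hy, hshadow⟩ := hC x n hn hd
  simpa [hper n hn y hy] using hW x y n hn hshadow

theorem abs_birkhoff_sub_birkhoff_le_of_dist_iterate_lt
    (hret : ∀ κ > (0 : ℝ), ∃ δ > (0 : ℝ), ∀ (x : X) (n : ℕ), 1 ≤ n →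
      dist (T^[n] x) x < δ → |birkhoff T f n x| < κ) (x₀ : X) :
    ∀ κ > (0 : ℝ), ∃ δ > (0 : ℝ), ∀ n m : ℕ, dist (T^[n] x₀) (T^[m] x₀) < δ →
      |birkhoff T f n x₀ - birkhoff T f m x₀| ≤ κ := by
  intro κ hκ
  obtain ⟨δ, hδ, hret⟩ := hret κ hκ
  have hle : ∀ n k : ℕ, dist (T^[n] x₀) (T^[n + k] x₀) < δ →
      |birkhoff T f n x₀ - birkhoff T f (n + k) x₀| ≤ κ := by
    intro n k hd
    rcases Nat.eq_zero_or_pos k with rfl | hk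
    · simpa using hκ.le
    rw [birkhoff_add, sub_add_cancel_left, abs_neg]
    refine (hret _ k hk ?_).le
    rwa [← Function.iterate_add_apply, Nat.add_comm, dist_comm]
  refine ⟨δ, hδ, fun n m hd => ?_⟩
  rcases le_total n m with h | h
  · obtain ⟨k, rfl⟩ := Nat.exists_eq_add_of_le h
    exact hle n k hd
  · obtain ⟨k, rfl⟩ := Nat.exists_eq_add_of_le h
    rw [abs_sub_comm]
    exact hle m k (dist_comm (T^[m + k] x₀) _ ▸ hd)

theorem exists_continuous_eq_birkhoff_on_orbit {x₀ : X}
    (hx₀ : Dense (Set.range fun n : ℕ => T^[n] x₀))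
    (hunif : ∀ κ > (0 : ℝ), ∃ δ > (0 : ℝ), ∀ n m : ℕ, dist (T^[n] x₀) (T^[m] x₀) < δ →
      |birkhoff T f n x₀ - birkhoff T f m x₀| ≤ κ) :
    ∃ q : X → ℝ, Continuous q ∧ ∀ n : ℕ, q (T^[n] x₀) = birkhoff T f n x₀ := by
  set S := Set.range fun n : ℕ => T^[n] x₀
  have hwd : ∀ n m : ℕ, T^[n] x₀ = T^[m] x₀ → birkhoff T f n x₀ = birkhoff T f m x₀ := by
    intro n m heq
    refine eq_of_abs_sub_le_all fun κ hκ => ?_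
    obtain ⟨δ, hδ, hE⟩ := hunif κ hκ
    exact hE n m (by rwa [heq, dist_self])
  choose index hindex using fun s : S => s.2
  let q₀ : S → ℝ := fun s => birkhoff T f (index s) x₀
  have hq₀ : UniformContinuous q₀ := by
    refine Metric.uniformContinuous_iff.2 fun κ hκ => ?_
    obtain ⟨δ, hδ, hE⟩ := hunif (κ / 2) (half_pos hκ)
    refine ⟨δ, hδ, fun {a b} hab => ?_⟩
    rw [Subtype.dist_eq, ← hindex a, ← hindex b] at hab
    exact (hE _ _ hab).trans_lt (half_lt_self hκ)
  have hui : IsUniformInducing (Subtype.val : S → X) :=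
    isUniformEmbedding_subtype_val.isUniformInducing
  have hdi : IsDenseInducing (Subtype.val : S → X) := hui.isDenseInducing hx₀.denseRange_val
  refine ⟨hdi.extend q₀, (uniformContinuous_uniformly_extend hui hx₀.denseRange_val hq₀).continuous,
    fun n => ?_⟩
  rw [hdi.extend_eq hq₀.continuous (⟨T^[n] x₀, n, rfl⟩ : S)]
  exact hwd _ _ (hindex _)

theorem eq_sub_of_eq_birkhoff_on_dense_orbit (hT : Continuous T) (hf : Continuous f) {x₀ : X}
    (hx₀ : Dense (Set.range fun n : ℕ => T^[n] x₀)) {q : X → ℝ} (hq : Continuous q)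
    (hqorb : ∀ n : ℕ, q (T^[n] x₀) = birkhoff T f n x₀) (x : X) : f x = q (T x) - q x := by
  have hEq : Set.EqOn f (fun x => q (T x) - q x) (Set.range fun n : ℕ => T^[n] x₀) := by
    rintro _ ⟨n, rfl⟩
    simp only [← Function.iterate_succ_apply' T n x₀, hqorb, birkhoff_succ]
    ring
  exact congrFun (hf.ext_on hx₀ (hq.comp hT |>.sub hq) hEq) x

end DenseOrbit

theorem statement8 {X : Type*} [MetricSpace X] [CompactSpace X]
    (T : X → X) (hT : Continuous T)
    (hClosing : ∀ ε > (0 : ℝ), ∃ δ > (0 : ℝ), ∀ (x : X) (n : ℕ), 1 ≤ n →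
      dist (T^[n] x) x < δ →
      ∃ y : X, T^[n] y = y ∧ ∀ k < n, dist (T^[k] x) (T^[k] y) < ε)
    (hDense : ∃ x : X, Dense (Set.range fun n : ℕ => T^[n] x))
    (f : X → ℝ) (hf : Continuous f)
    (hWalters : ∀ κ > (0 : ℝ), ∃ ε > (0 : ℝ), ∀ (x y : X) (n : ℕ), 1 ≤ n →
      (∀ k < n, dist (T^[k] x) (T^[k] y) < ε) →
        |birkhoff T f n x - birkhoff T f n y| < κ) :
    ((∃ q : X → ℝ, Continuous q ∧ ∀ x : X, f x = q (T x) - q x) ↔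
      Tendsto (fun n : ℕ => (⨆ x : X, |birkhoff T f n x|) / (n : ℝ)) atTop (nhds 0)) ∧
    (Tendsto (fun n : ℕ => (⨆ x : X, |birkhoff T f n x|) / (n : ℝ)) atTop (nhds 0) ↔
      ∃ K : ℝ, ∀ (n : ℕ), 1 ≤ n → ∀ x : X, |birkhoff T f n x| ≤ K) := by
  obtain ⟨x₀, hx₀⟩ := hDense
  have hcob : Tendsto (fun n : ℕ => (⨆ x : X, |birkhoff T f n x|) / (n : ℝ)) atTop (𝓝 0) →
      ∃ q : X → ℝ, Continuous q ∧ ∀ x : X, f x = q (T x) - q x := by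
    intro H
    have hret := abs_birkhoff_lt_of_dist_iterate_lt hClosing hWalters
      fun _ hn _ hy => birkhoff_eq_zero_of_isPeriodicPt hT hf H hn hy
    obtain ⟨q, hq, hqorb⟩ := exists_continuous_eq_birkhoff_on_orbit hx₀
      (abs_birkhoff_sub_birkhoff_le_of_dist_iterate_lt hret x₀)
    exact ⟨q, hq, eq_sub_of_eq_birkhoff_on_dense_orbit hT hf hx₀ hq hqorb⟩
  exact ⟨⟨fun h => tendsto_iSup_abs_birkhoff_div_of_bound (exists_bound_birkhoff_of_coboundary h),
    hcob⟩, ⟨fun H => exists_bound_birkhoff_of_coboundary (hcob H),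
    tendsto_iSup_abs_birkhoff_div_of_bound⟩⟩
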